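/- Let n be a natural number. Define A = {x : Fin n → ℝ | ∀ i, 0 ≤ x i ∧ x i ≤ 1} (the unit hypercube [0,1]^n) and B = {x : Fin n → ℝ | (∑ i, (x i)^2) < ∑ i, x i}. Then the set of binary vectors {x : Fin n → ℝ | ∀ i, x i = 0 ∨ x i = 1} equals the set difference A \ B. -/
import Mathlib

theorem binary_set_eq_diff (n : ℕ) :
    {x : Fin n → ℝ | ∀ i, x i = 0 ∨ x i = 1} =
      {x : Fin n → ℝ | ∀ i, 0 ≤ x i ∧ x i ≤ 1} \
        {x : Fin n → ℝ | (∑ i, (x i) ^ 2) < ∑ i, x i} := by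
  ext x
  simp only [Set.mem_setOf_eq, Set.mem_diff, not_lt]
  constructor
  · intro h
    refine ⟨fun i => ?_, ?_⟩
    · rcases h i with h | h <;> rw [h] <;> norm_num
    · refine le_of_eq (Finset.sum_congr rfl fun i _ => ?_)
      rcases h i with h | h <;> rw [h] <;> ring
  · rintro ⟨h1, h2⟩ i
    have hle : ∀ j ∈ Finset.univ, (x j) ^ 2 ≤ x j := fun j _ => by
      nlinarith [(h1 j).1, (h1 j).2]
    have := (Finset.sum_le_sum hle).antisymm h2
    have heq : (x i) ^ 2 = x i := by
      have := (Finset.sum_eq_sum_iff_of_le hle).mp this i (Finset.mem_univ i)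
      linarith
    have : x i * (x i - 1) = 0 := by nlinarith
    rcases mul_eq_zero.mp this with h | h
    · exact Or.inl h
    · exact Or.inr (by linarith)
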